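/- arXiv:2407.14438 — 6 statements merged into one kernel-verified Lean document; each statement's English description precedes it below -/
import Mathlib

section
/- Let A be an m×n real matrix with rows a_1,…,a_m, let J = {1,…,m} be partitioned into a nonempty Ĵ and J̄, with fixed right-hand sides b̄ on J̄ and initial right-hand sides b̂_0 on Ĵ satisfying b_L ≤ b̂_0 ≤ b_U componentwise on Ĵ; let b_0 ∈ ℝ^m be equal to b̂_0 on Ĵ and b̄ on J̄. If there exists a point x ∈ ℝ^n with A x ≤ b_0 that binds some constraint i ∈ Ĵ (i.e., a_i · x = (b_0)_i), then the feasible set Φ(Ĵ) of the inverse learning problem IL_g is nonempty. -/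
open Matrix BigOperators

/-- The feasible set conditions of the inverse learning problem `IL_g`:
`(c, x, y, b)` is feasible for `IL_g` with matrix `A`, improvable index set `Jhat`,
fixed right-hand sides `bbar` off `Jhat`, and bound vectors `bL`, `bU`. -/
def ILgFeas {m n : ℕ} (A : Matrix (Fin m) (Fin n) ℝ) (Jhat : Finset (Fin m))
    (bbar bL bU : Fin m → ℝ) (c x : Fin n → ℝ) (y b : Fin m → ℝ) : Prop :=
  (∀ j ∉ Jhat, b j = bbar j) ∧
  (∀ j ∉ Jhat, y j = 0) ∧
  (∀ j ∈ Jhat, bL j ≤ b j ∧ b j ≤ bU j) ∧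
  (∀ i, A.mulVec x i ≤ b i) ∧
  Aᵀ.mulVec y = c ∧
  c ⬝ᵥ x = b ⬝ᵥ y ∧
  (∑ j ∈ Jhat, y j) = 1 ∧
  (∀ j, 0 ≤ y j)

/-- Euclidean norm on `ℝ^n`. -/
noncomputable def euclNorm {n : ℕ} (v : Fin n → ℝ) : ℝ :=
  Real.sqrt (∑ i, (v i) ^ 2)

/-- Proposition 1, nonemptiness of `Φ(Ĵ)`. -/
theorem stmt1 {m n : ℕ} (A : Matrix (Fin m) (Fin n) ℝ) (Jhat : Finset (Fin m))
    (hJhat : Jhat.Nonempty) (bbar bL bU b0 : Fin m → ℝ)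
    (hb0hat : ∀ j ∈ Jhat, bL j ≤ b0 j ∧ b0 j ≤ bU j)
    (hb0bar : ∀ j ∉ Jhat, b0 j = bbar j)
    (hex : ∃ x : Fin n → ℝ, (∀ k, A.mulVec x k ≤ b0 k) ∧ ∃ i ∈ Jhat, A i ⬝ᵥ x = b0 i) :
    ∃ (c x : Fin n → ℝ) (y b : Fin m → ℝ), ILgFeas A Jhat bbar bL bU c x y b := by
  obtain ⟨x, hx, i, hi, hbind⟩ := hex
  set y : Fin m → ℝ := fun j => if j = i then 1 else 0 with hy
  refine ⟨Aᵀ.mulVec y, x, y, b0, ?_, ?_, hb0hat, hx, rfl, ?_, ?_, ?_⟩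
  · exact hb0bar
  · intro j hj
    simp [hy]
    rintro rfl; exact hj hi
  · have hc : Aᵀ.mulVec y = A i := by
      funext j
      simp [Matrix.mulVec, dotProduct, hy, Matrix.transpose_apply]
    have hby : b0 ⬝ᵥ y = b0 i := by
      simp [dotProduct, hy]
    rw [hc, hby, hbind]
  · rw [Finset.sum_eq_single i]
    · simp [hy]
    · intro j _ hj; simp [hy, hj]
    · intro h; exact absurd hi h
  · intro j; simp [hy]; positivity
end

section
/- Let A be an m×n real matrix, let J = {1,…,m}, let b̄ ∈ ℝ^m be fixed right-hand-side values satisfying b_L ≤ b̄ ≤ b_U componentwise for bound vectors b_L, b_U ∈ ℝ^m, and for each subset Ĵ ⊆ J let Φ(Ĵ) denote the feasible set of the inverse learning problem IL_g with improvable index set Ĵ (and right-hand sides fixed at b̄_j on J \ Ĵ). If Ĵ_2 ⊆ Ĵ_1 ⊆ J, then Φ(Ĵ_2) ⊆ Φ(Ĵ_1). In particular, Φ(∅) ⊆ Φ(Ĵ) for every Ĵ ⊆ J. -/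
open Matrix BigOperators

/-- Proposition 2, part 2: monotonicity of `Φ(Ĵ)` in `Ĵ`. -/
theorem stmt3 {m n : ℕ} (A : Matrix (Fin m) (Fin n) ℝ) (bbar bL bU : Fin m → ℝ)
    (hb : ∀ j, bL j ≤ bbar j ∧ bbar j ≤ bU j)
    (J1 J2 : Finset (Fin m)) (hsub : J2 ⊆ J1) :
    (∀ (c x : Fin n → ℝ) (y b : Fin m → ℝ),
        ILgFeas A J2 bbar bL bU c x y b → ILgFeas A J1 bbar bL bU c x y b) ∧
    (∀ (Jhat : Finset (Fin m)) (c x : Fin n → ℝ) (y b : Fin m → ℝ),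
        ILgFeas A ∅ bbar bL bU c x y b → ILgFeas A Jhat bbar bL bU c x y b) := by
  constructor
  · rintro c x y b ⟨h1, h2, h3, h4, h5, h6, h7, h8⟩
    refine ⟨fun j hj => h1 j (fun h => hj (hsub h)),
      fun j hj => h2 j (fun h => hj (hsub h)), ?_, h4, h5, h6, ?_, h8⟩
    · intro j hj
      by_cases hj2 : j ∈ J2
      · exact h3 j hj2
      · rw [h1 j hj2]; exact hb j
    · rw [← h7]
      symm; apply Finset.sum_subset hsub
      intro j _ hj2
      exact h2 j hj2
  · rintro Jhat c x y b ⟨h1, h2, h3, h4, h5, h6, h7, h8⟩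
    simp at h7
end

section
/- Let A be an m×n real matrix, let J = {1,…,m} be partitioned into a nonempty Ĵ and J̄ with fixed right-hand sides b̄ on J̄, let b_L, b_U ∈ ℝ^m be bound vectors, let x_0 ∈ ℝ^n be an observed decision, and let ω ∈ [0,1]. Suppose (c, x, y, b) is an optimal solution of IL_g, i.e., (c, x, y, b) ∈ Φ(Ĵ) and for every (c', x', y', b') ∈ Φ(Ĵ) one has ω‖x − x_0‖ − (1−ω) b · y ≤ ω‖x' − x_0‖ − (1−ω) b' · y'. If x_0 belongs to the projection of Φ(Ĵ) onto the x-coordinate, then c · x ≥ c · x_0. -/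
open Matrix BigOperators

lemma euclNorm_nonneg {n : ℕ} (v : Fin n → ℝ) : 0 ≤ euclNorm v :=
  Real.sqrt_nonneg _

lemma euclNorm_scale {n : ℕ} (a : ℝ) (v : Fin n → ℝ) :
    euclNorm (fun i => a * v i) = |a| * euclNorm v := by
  unfold euclNorm
  simp_rw [mul_pow]
  rw [← Finset.mul_sum, Real.sqrt_mul (sq_nonneg a), Real.sqrt_sq_eq_abs]

lemma dot_trans {m n : ℕ} (A : Matrix (Fin m) (Fin n) ℝ) (y : Fin m → ℝ) (z : Fin n → ℝ) :
    (Aᵀ.mulVec y) ⬝ᵥ z = y ⬝ᵥ (A.mulVec z) := by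
  rw [Matrix.mulVec_transpose, Matrix.dotProduct_mulVec]

lemma mulVec_combo {m n : ℕ} (A : Matrix (Fin m) (Fin n) ℝ) (s t : ℝ) (u v : Fin n → ℝ)
    (i : Fin m) :
    A.mulVec (fun k => s * u k + t * v k) i = s * A.mulVec u i + t * A.mulVec v i := by
  simp [Matrix.mulVec, dotProduct, mul_add, Finset.sum_add_distrib, Finset.mul_sum,
    mul_left_comm]

lemma ite_dot {m : ℕ} (v : Fin m → ℝ) (j : Fin m) :
    (fun i => if i = j then (1:ℝ) else 0) ⬝ᵥ v = v j := by
  simp [dotProduct, ite_mul, one_mul, zero_mul, Finset.sum_ite_eq']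

lemma dot_ite {m : ℕ} (v : Fin m → ℝ) (j : Fin m) :
    v ⬝ᵥ (fun i => if i = j then (1:ℝ) else 0) = v j := by
  simp [dotProduct, mul_ite, mul_one, mul_zero, Finset.sum_ite_eq']

/-- Theorem 1: an optimal `IL_g` solution improves on a feasible observed
decision `x₀`. -/
theorem stmt4 {m n : ℕ} (A : Matrix (Fin m) (Fin n) ℝ) (Jhat : Finset (Fin m))
    (hJhat : Jhat.Nonempty) (bbar bL bU : Fin m → ℝ)
    (x0 : Fin n → ℝ) (ω : ℝ) (hω0 : 0 ≤ ω) (hω1 : ω ≤ 1)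
    (c x : Fin n → ℝ) (y b : Fin m → ℝ)
    (hfeas : ILgFeas A Jhat bbar bL bU c x y b)
    (hopt : ∀ (c' x' : Fin n → ℝ) (y' b' : Fin m → ℝ),
      ILgFeas A Jhat bbar bL bU c' x' y' b' →
        ω * euclNorm (fun i => x i - x0 i) - (1 - ω) * (b ⬝ᵥ y) ≤
        ω * euclNorm (fun i => x' i - x0 i) - (1 - ω) * (b' ⬝ᵥ y'))
    (hx0 : ∃ (c' : Fin n → ℝ) (y' b' : Fin m → ℝ), ILgFeas A Jhat bbar bL bU c' x0 y' b') :
    c ⬝ᵥ x0 ≤ c ⬝ᵥ x := by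
  obtain ⟨h1, h2, h3, h4, h5, h6, h7, h8⟩ := hfeas
  obtain ⟨c', y', b', g1, g2, g3, g4, g5, g6, g7, g8⟩ := hx0
  have hNnn : 0 ≤ euclNorm (fun i => x i - x0 i) := euclNorm_nonneg _
  by_cases hω : ω = 1
  · -- ω = 1 : x = x0
    have hbase := hopt c' x0 y' b' ⟨g1, g2, g3, g4, g5, g6, g7, g8⟩
    have hz : euclNorm (fun i => x0 i - x0 i) = 0 := by
      simp [euclNorm]
    rw [hω, hz] at hbase
    have hN0 : euclNorm (fun i => x i - x0 i) ≤ 0 := by linarith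
    have hsum0 : (∑ i, (x i - x0 i) ^ 2) = 0 := by
      have h1' : Real.sqrt (∑ i, (x i - x0 i) ^ 2) = 0 :=
        le_antisymm (by simpa [euclNorm] using hN0) (Real.sqrt_nonneg _)
      have h2' : 0 ≤ ∑ i, (x i - x0 i) ^ 2 :=
        Finset.sum_nonneg fun i _ => sq_nonneg _
      nlinarith [Real.sq_sqrt h2', h1']
    have hxx : x = x0 := by
      funext i
      have := (Finset.sum_eq_zero_iff_of_nonneg
        (fun i (_ : i ∈ Finset.univ) => sq_nonneg (x i - x0 i))).mp hsum0 i (Finset.mem_univ i)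
      have : x i - x0 i = 0 := by nlinarith
      linarith
    rw [hxx]
  · have hω1' : ω < 1 := lt_of_le_of_ne hω1 hω
    have hpos : (0:ℝ) < 1 - ω := by linarith
    -- complementary slackness
    have ecx : c ⬝ᵥ x = ∑ i, y i * A.mulVec x i := by
      rw [← h5, dot_trans]; rfl
    have eby : b ⬝ᵥ y = ∑ i, y i * b i := by
      simp [dotProduct, mul_comm]
    have hsumcs : ∑ i, y i * (b i - A.mulVec x i) = 0 := by
      have : ∑ i, (y i * b i - y i * A.mulVec x i) = 0 := by
        rw [Finset.sum_sub_distrib, ← ecx, ← eby, h6]; ring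
      simpa [mul_sub] using this
    have hcs : ∀ i, y i * (b i - A.mulVec x i) = 0 := fun i =>
      (Finset.sum_eq_zero_iff_of_nonneg
        (fun i _ => mul_nonneg (h8 i) (by linarith [h4 i]))).mp hsumcs i (Finset.mem_univ i)
    -- key: for every j in the support of y, (A x0)_j ≤ b ⬝ᵥ y
    have key : ∀ j, 0 < y j → A.mulVec x0 j ≤ b ⬝ᵥ y := by
      intro j hyj
      have hjJ : j ∈ Jhat := by
        by_contra hj
        rw [h2 j hj] at hyj
        exact lt_irrefl 0 hyj
      have hAxj : A.mulVec x j = b j := by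
        rcases mul_eq_zero.mp (hcs j) with h | h
        · exact absurd h (ne_of_gt hyj)
        · linarith
      by_cases hgood : bL j ≤ A.mulVec x0 j
      · -- good case: compare with (Aᵀ e_j, x0, e_j, b̂)
        set yy : Fin m → ℝ := fun i => if i = j then (1:ℝ) else 0 with hyy
        set bb : Fin m → ℝ := fun i => if i ∈ Jhat then max (A.mulVec x0 i) (bL i) else bbar i
          with hbb
        have feas : ILgFeas A Jhat bbar bL bU (Aᵀ.mulVec yy) x0 yy bb := by
          refine ⟨?_, ?_, ?_, ?_, rfl, ?_, ?_, ?_⟩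
          · intro i hi; simp [hbb, hi]
          · intro i hi
            have hij : i ≠ j := fun h => hi (h ▸ hjJ)
            simp [hyy, hij]
          · intro i hi
            refine ⟨by simp [hbb, hi, le_max_right], ?_⟩
            simp only [hbb, hi, if_true]
            exact max_le (le_trans (g4 i) (g3 i hi).2) (le_trans (g3 i hi).1 (g3 i hi).2)
          · intro i
            by_cases hi : i ∈ Jhat
            · simp only [hbb, hi, if_true]
              exact le_max_left _ _
            · simp only [hbb, hi, if_false]
              calc A.mulVec x0 i ≤ b' i := g4 i
                _ = bbar i := g1 i hi
          · rw [dot_trans, ite_dot, dot_ite]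
            simp only [hbb, hjJ, if_true]
            exact (max_eq_left hgood).symm
          · simp [hyy, Finset.sum_ite_eq', hjJ]
          · intro i
            by_cases h : i = j <;> simp [hyy, h]
        have hcomp := hopt _ x0 yy bb feas
        have hz : euclNorm (fun i => x0 i - x0 i) = 0 := by simp [euclNorm]
        have hbyy : bb ⬝ᵥ yy = A.mulVec x0 j := by
          rw [dot_ite]
          simp only [hbb, hjJ, if_true]
          exact max_eq_left hgood
        rw [hz, hbyy] at hcomp
        have h9 : (1 - ω) * A.mulVec x0 j ≤ (1 - ω) * (b ⬝ᵥ y) := by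
          have h10 : 0 ≤ ω * euclNorm (fun i => x i - x0 i) := mul_nonneg hω0 hNnn
          linarith
        exact le_of_mul_le_mul_left h9 hpos
      · -- bad case: (A x0)_j < bL j; compare with interpolated point
        have hbad : A.mulVec x0 j < bL j := not_le.mp hgood
        have hbLb : bL j ≤ b j := (h3 j hjJ).1
        set d : ℝ := b j - A.mulVec x0 j with hd
        have hdpos : 0 < d := by simp only [hd]; linarith
        set t : ℝ := (b j - bL j) / d with ht
        have ht0 : 0 ≤ t := div_nonneg (by linarith) hdpos.le
        have ht1 : t ≤ 1 := by
          rw [ht, div_le_one hdpos]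
          simp only [hd]; linarith
        have htd : t * d = b j - bL j := by
          rw [ht]; field_simp
        set xh : Fin n → ℝ := fun k => (1 - t) * x k + t * x0 k with hxh
        have hAxh : ∀ i, A.mulVec xh i = (1 - t) * A.mulVec x i + t * A.mulVec x0 i :=
          fun i => mulVec_combo A (1 - t) t x x0 i
        have hAxhj : A.mulVec xh j = bL j := by
          rw [hAxh j, hAxj]
          have : (1 - t) * b j + t * A.mulVec x0 j = b j - t * d := by
            simp only [hd]; ring
          rw [this, htd]; ring
        set yy : Fin m → ℝ := fun i => if i = j then (1:ℝ) else 0 with hyy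
        set bb : Fin m → ℝ := fun i =>
          if i ∈ Jhat then (if i = j then bL j else max (b i) (b' i)) else bbar i with hbb
        have feas : ILgFeas A Jhat bbar bL bU (Aᵀ.mulVec yy) xh yy bb := by
          refine ⟨?_, ?_, ?_, ?_, rfl, ?_, ?_, ?_⟩
          · intro i hi; simp [hbb, hi]
          · intro i hi
            have hij : i ≠ j := fun h => hi (h ▸ hjJ)
            simp [hyy, hij]
          · intro i hi
            by_cases hij : i = j
            · subst hij
              simp only [hbb, hi, if_true]
              exact ⟨le_refl _, le_trans hbLb (h3 i hi).2⟩
            · simp only [hbb, hi, hij, if_true, if_false]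
              exact ⟨le_trans (h3 i hi).1 (le_max_left _ _),
                max_le (h3 i hi).2 (g3 i hi).2⟩
          · intro i
            have hle : A.mulVec xh i ≤ (1 - t) * b i + t * b' i := by
              rw [hAxh i]
              exact add_le_add (mul_le_mul_of_nonneg_left (h4 i) (by linarith))
                (mul_le_mul_of_nonneg_left (g4 i) ht0)
            by_cases hi : i ∈ Jhat
            · by_cases hij : i = j
              · subst hij
                simp only [hbb, hi, if_true]
                exact le_of_eq hAxhj
              · simp only [hbb, hi, hij, if_true, if_false]
                calc A.mulVec xh i ≤ (1 - t) * b i + t * b' i := hle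
                  _ ≤ (1 - t) * max (b i) (b' i) + t * max (b i) (b' i) :=
                    add_le_add (mul_le_mul_of_nonneg_left (le_max_left _ _) (by linarith))
                      (mul_le_mul_of_nonneg_left (le_max_right _ _) ht0)
                  _ = max (b i) (b' i) := by ring
            · simp only [hbb, hi, if_false]
              calc A.mulVec xh i ≤ (1 - t) * b i + t * b' i := hle
                _ = (1 - t) * bbar i + t * bbar i := by rw [h1 i hi, g1 i hi]
                _ = bbar i := by ring
          · rw [dot_trans, ite_dot, dot_ite, hAxhj]
            simp [hbb, hjJ]
          · simp [hyy, Finset.sum_ite_eq', hjJ]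
          · intro i
            by_cases h : i = j <;> simp [hyy, h]
        have hcomp := hopt _ xh yy bb feas
        have hbyy : bb ⬝ᵥ yy = bL j := by
          rw [dot_ite]; simp [hbb, hjJ]
        have hnormeq : euclNorm (fun i => xh i - x0 i) =
            (1 - t) * euclNorm (fun i => x i - x0 i) := by
          have hfun : (fun i => xh i - x0 i) = fun i => (1 - t) * (x i - x0 i) := by
            funext i; simp only [hxh]; ring
          rw [hfun, euclNorm_scale, abs_of_nonneg (by linarith : (0:ℝ) ≤ 1 - t)]
        rw [hbyy, hnormeq] at hcomp
        have hNle : (1 - t) * euclNorm (fun i => x i - x0 i) ≤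
            euclNorm (fun i => x i - x0 i) := by
          nlinarith
        have h9 : (1 - ω) * bL j ≤ (1 - ω) * (b ⬝ᵥ y) := by
          have h10 := mul_le_mul_of_nonneg_left hNle hω0
          linarith
        have : bL j ≤ b ⬝ᵥ y := le_of_mul_le_mul_left h9 hpos
        linarith
    -- assemble
    have hsumy : (∑ i, y i) = 1 := by
      rw [← h7]
      exact (Finset.sum_subset (Finset.subset_univ _) (fun i _ hi => h2 i hi)).symm
    have hfinal : c ⬝ᵥ x0 ≤ b ⬝ᵥ y := by
      have e0 : c ⬝ᵥ x0 = ∑ i, y i * A.mulVec x0 i := by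
        rw [← h5, dot_trans]; rfl
      rw [e0]
      calc (∑ i, y i * A.mulVec x0 i) ≤ ∑ i, y i * (b ⬝ᵥ y) := by
            refine Finset.sum_le_sum fun i _ => ?_
            rcases eq_or_lt_of_le (h8 i) with h | h
            · rw [← h]; simp
            · exact mul_le_mul_of_nonneg_left (key i h) (h8 i)
        _ = (∑ i, y i) * (b ⬝ᵥ y) := by rw [Finset.sum_mul]
        _ = b ⬝ᵥ y := by rw [hsumy, one_mul]
    rw [h6]
    exact hfinal
end

section
/- Let A be an m×n real matrix with rows a_1,…,a_m, fix j ∈ J = {1,…,m}, set Ĵ = {j} and J̄ = J \ {j} with fixed right-hand sides b̄ on J̄, let b_L, b_U ∈ ℝ^m be bound vectors, let x_0 ∈ ℝ^n, and let ω ∈ [0,1]. Suppose (x*, b̂*) ∈ ℝ^n × ℝ is feasible for the MIL problem, i.e., a_i · x* ≤ b̄_i for all i ∈ J̄, a_j · x* = b̂*, and (b_L)_j ≤ b̂* ≤ (b_U)_j. Then the tuple (c*, x*, y*, b*) with y* = e_j (the j-th standard basis vector of ℝ^m), c* = Aᵀ e_j = a_j, and b* ∈ ℝ^m defined by (b*)_j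 = b̂* and (b*)_i = b̄_i for i ≠ j, is feasible for IL_g, i.e., (c*, x*, y*, b*) ∈ Φ({j}). -/
open Matrix BigOperators

/-- Feasibility for the `MIL` problem with improvable constraint `j`:
`a_i · x ≤ b̄_i` for all `i ≠ j`, `a_j · x = b̂`, and `(b_L)_j ≤ b̂ ≤ (b_U)_j`. -/
def MILFeas {m n : ℕ} (A : Matrix (Fin m) (Fin n) ℝ) (j : Fin m)
    (bbar bL bU : Fin m → ℝ) (x : Fin n → ℝ) (bhat : ℝ) : Prop :=
  (∀ i, i ≠ j → A i ⬝ᵥ x ≤ bbar i) ∧ A j ⬝ᵥ x = bhat ∧ bL j ≤ bhat ∧ bhat ≤ bU j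

/-- MIL-feasible pairs yield `IL_g`-feasible tuples. -/
theorem stmt7 {m n : ℕ} (A : Matrix (Fin m) (Fin n) ℝ) (j : Fin m)
    (bbar bL bU : Fin m → ℝ) (x0 : Fin n → ℝ) (ω : ℝ) (hω0 : 0 ≤ ω) (hω1 : ω ≤ 1)
    (xstar : Fin n → ℝ) (bhatstar : ℝ)
    (hfeas : MILFeas A j bbar bL bU xstar bhatstar) :
    Aᵀ.mulVec (Pi.single j 1) = A j ∧
    ILgFeas A {j} bbar bL bU (A j) xstar (Pi.single j 1)
      (Function.update bbar j bhatstar) := by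
  obtain ⟨h1, h2, h3, h4⟩ := hfeas
  have hAe : Aᵀ.mulVec (Pi.single j 1) = A j := by
    ext i
    simp [Matrix.mulVec, dotProduct, Pi.single_apply, Finset.sum_ite_eq',
      Matrix.transpose_apply]
  refine ⟨hAe, ?_, ?_, ?_, ?_, hAe, ?_, ?_, ?_⟩
  · intro k hk
    simp only [Finset.mem_singleton] at hk
    simp [Function.update_of_ne hk]
  · intro k hk
    simp only [Finset.mem_singleton] at hk
    simp [Pi.single_apply, hk]
  · intro k hk
    simp only [Finset.mem_singleton] at hk
    subst hk
    simpa using ⟨h3, h4⟩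
  · intro i
    by_cases hij : i = j
    · subst hij
      simp [Matrix.mulVec, h2]
    · simpa [Matrix.mulVec, Function.update_of_ne hij] using h1 i hij
  · have : (Function.update bbar j bhatstar) ⬝ᵥ (Pi.single j 1 : Fin m → ℝ) = bhatstar := by
      simp [dotProduct, Pi.single_apply, Finset.sum_ite_eq']
    rw [this, h2]
  · simp
  · intro k
    classical
    rcases eq_or_ne k j with rfl | h
    · simp
    · simp [Pi.single_apply, h]
end

section
/- Let A be an m×n real matrix with rows a_1,…,a_m, fix j ∈ J = {1,…,m}, set Ĵ = {j} and J̄ = J \ {j} with fixed right-hand sides b̄ on J̄, let b_L, b_U ∈ ℝ^m be bound vectors, let x_0 ∈ ℝ^n, and let ω ∈ [0,1]. If (x*, b̂*) is an optimal solution of the MIL problem (feasible for MIL and minimizing ω‖x − x_0‖ − (1−ω) b̂ over all MIL-feasible pairs (x, b̂)), then there exists an optimal solution (c, x, y, b) of IL_g with Ĵ = {j} (feasible in Φ({j}) and minimizing ω‖x − x_0‖ − (1−ω) b · y over Φ({j})) such that x = x* and b_j = b̂*. -/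
open Matrix BigOperators

/-- Theorem 2: optimal MIL solutions yield optimal `IL_g` solutions. -/
theorem stmt8 {m n : ℕ} (A : Matrix (Fin m) (Fin n) ℝ) (j : Fin m)
    (bbar bL bU : Fin m → ℝ) (x0 : Fin n → ℝ) (ω : ℝ) (hω0 : 0 ≤ ω) (hω1 : ω ≤ 1)
    (xstar : Fin n → ℝ) (bhatstar : ℝ)
    (hfeas : MILFeas A j bbar bL bU xstar bhatstar)
    (hopt : ∀ (x : Fin n → ℝ) (bhat : ℝ), MILFeas A j bbar bL bU x bhat →
      ω * euclNorm (fun i => xstar i - x0 i) - (1 - ω) * bhatstar ≤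
      ω * euclNorm (fun i => x i - x0 i) - (1 - ω) * bhat) :
    ∃ (c x : Fin n → ℝ) (y b : Fin m → ℝ),
      ILgFeas A {j} bbar bL bU c x y b ∧
      (∀ (c' x' : Fin n → ℝ) (y' b' : Fin m → ℝ),
        ILgFeas A {j} bbar bL bU c' x' y' b' →
          ω * euclNorm (fun i => x i - x0 i) - (1 - ω) * (b ⬝ᵥ y) ≤
          ω * euclNorm (fun i => x' i - x0 i) - (1 - ω) * (b' ⬝ᵥ y')) ∧
      x = xstar ∧ b j = bhatstar := by
  obtain ⟨hineq, heq, hL, hU⟩ := hfeas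
  set y : Fin m → ℝ := fun i => if i = j then 1 else 0 with hy
  set b : Fin m → ℝ := fun i => if i = j then bhatstar else bbar i with hb
  have hby : b ⬝ᵥ y = bhatstar := by
    simp [dotProduct, hy, hb, Finset.sum_ite_eq']
  refine ⟨A j, xstar, y, b, ?_, ?_, rfl, by simp [hb]⟩
  · refine ⟨?_, ?_, ?_, ?_, ?_, ?_, ?_, ?_⟩
    · intro i hi; simp at hi; simp [hb, hi]
    · intro i hi; simp at hi; simp [hy, hi]
    · intro i hi; simp at hi; subst hi; simp [hb, hL, hU]
    · intro i
      by_cases hij : i = j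
      · subst hij; simp [hb, Matrix.mulVec, heq]
      · simpa [hb, hij, Matrix.mulVec] using hineq i hij
    · funext i
      simp [Matrix.mulVec, dotProduct, hy, Finset.sum_ite_eq']
    · rw [hby]; exact heq
    · simp [hy]
    · intro i; by_cases hij : i = j <;> simp [hy, hij]
  · intro c' x' y' b' ⟨h1, h2, h3, h4, h5, h6, h7, h8⟩
    have hyj : y' j = 1 := by simpa using h7
    have hy0 : ∀ i, i ≠ j → y' i = 0 := by
      intro i hi; exact h2 i (by simp [hi])
    have hb'y' : b' ⬝ᵥ y' = b' j := by
      rw [dotProduct]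
      rw [Finset.sum_eq_single j]
      · simp [hyj]
      · intro i _ hi; simp [hy0 i hi]
      · simp
    have hcx : c' ⬝ᵥ x' = A j ⬝ᵥ x' := by
      rw [← h5]
      have : Aᵀ.mulVec y' ⬝ᵥ x' = y' ⬝ᵥ A.mulVec x' := by
        rw [Matrix.mulVec_transpose, ← Matrix.dotProduct_mulVec]
      rw [this, dotProduct]
      rw [Finset.sum_eq_single j]
      · simp [hyj, Matrix.mulVec]
      · intro i _ hi; simp [hy0 i hi]
      · simp
    have hAjx' : A j ⬝ᵥ x' = b' j := by rw [← hcx, h6, hb'y']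
    have hmil : MILFeas A j bbar bL bU x' (b' j) := by
      refine ⟨?_, hAjx', ?_, ?_⟩
      · intro i hi
        have := h4 i
        rw [h1 i (by simp [hi])] at this
        simpa [Matrix.mulVec] using this
      · exact (h3 j (by simp)).1
      · exact (h3 j (by simp)).2
    have := hopt x' (b' j) hmil
    rw [hby, hb'y']
    exact this
end

section
/- Let A be an m×n real matrix with rows a_1,…,a_m, fix j ∈ J = {1,…,m}, set Ĵ = {j} and J̄ = J \ {j} with fixed right-hand sides b̄ on J̄, let b_L, b_U ∈ ℝ^m be bound vectors, let x_0 ∈ ℝ^n, and let ω ∈ [0,1]. Then every tuple (c, x, y, b) ∈ Φ({j}) satisfies y = e_j (the j-th standard basis vector of ℝ^m), c = a_j, and a_j · x = b_j; consequently, the map sending (c, x, y, b) ∈ Φ({j}) to (x, b_j) is a bijection between Φ({j}) and the feasible set of the MIL problem, and it carries the IL_g objective ω‖x − x_0‖ − (1−ω) b · y to the MIL objective ω‖x − x_0‖ − (1−ω) b̂. In particular, the sets of attained objective values of IL_g over Φ({j}) and of MIL over its feasible set coincide. -/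
open Matrix BigOperators

/-- Structure of `Φ({j})` and its bijection with the MIL feasible set,
carrying the `IL_g` objective to the MIL objective. -/
theorem stmt9 {m n : ℕ} (A : Matrix (Fin m) (Fin n) ℝ) (j : Fin m)
    (bbar bL bU : Fin m → ℝ) (x0 : Fin n → ℝ) (ω : ℝ) (hω0 : 0 ≤ ω) (hω1 : ω ≤ 1) :
    (∀ (c x : Fin n → ℝ) (y b : Fin m → ℝ), ILgFeas A {j} bbar bL bU c x y b →
        y = Pi.single j 1 ∧ c = A j ∧ A j ⬝ᵥ x = b j) ∧
    Set.BijOn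
      (fun p : (Fin n → ℝ) × (Fin n → ℝ) × (Fin m → ℝ) × (Fin m → ℝ) =>
        (p.2.1, p.2.2.2 j))
      {p : (Fin n → ℝ) × (Fin n → ℝ) × (Fin m → ℝ) × (Fin m → ℝ) |
        ILgFeas A {j} bbar bL bU p.1 p.2.1 p.2.2.1 p.2.2.2}
      {q : (Fin n → ℝ) × ℝ | MILFeas A j bbar bL bU q.1 q.2} ∧
    (∀ (c x : Fin n → ℝ) (y b : Fin m → ℝ), ILgFeas A {j} bbar bL bU c x y b →
        ω * euclNorm (fun i => x i - x0 i) - (1 - ω) * (b ⬝ᵥ y) =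
        ω * euclNorm (fun i => x i - x0 i) - (1 - ω) * (b j)) ∧
    ((fun p : (Fin n → ℝ) × (Fin n → ℝ) × (Fin m → ℝ) × (Fin m → ℝ) =>
        ω * euclNorm (fun i => p.2.1 i - x0 i) - (1 - ω) * (p.2.2.2 ⬝ᵥ p.2.2.1)) ''
      {p : (Fin n → ℝ) × (Fin n → ℝ) × (Fin m → ℝ) × (Fin m → ℝ) |
        ILgFeas A {j} bbar bL bU p.1 p.2.1 p.2.2.1 p.2.2.2} =
      (fun q : (Fin n → ℝ) × ℝ =>
        ω * euclNorm (fun i => q.1 i - x0 i) - (1 - ω) * q.2) ''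
      {q : (Fin n → ℝ) × ℝ | MILFeas A j bbar bL bU q.1 q.2}) := by

  have hdot : ∀ (b : Fin m → ℝ), b ⬝ᵥ (Pi.single j (1:ℝ)) = b j := by
    intro b; simp [dotProduct_single]
  have hmv : Aᵀ.mulVec (Pi.single j (1:ℝ)) = A j := by
    funext k
    simp [Matrix.mulVec, dotProduct, Pi.single_apply, Matrix.transpose_apply,
      mul_ite, Finset.sum_ite_eq']
  have key : ∀ (c x : Fin n → ℝ) (y b : Fin m → ℝ), ILgFeas A {j} bbar bL bU c x y b →
      y = Pi.single j 1 ∧ c = A j ∧ A j ⬝ᵥ x = b j := by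
    intro c x y b h
    obtain ⟨hb, hy0, hbnd, hAx, hAty, hcx, hsum, hynn⟩ := h
    have hyj : y j = 1 := by simpa using hsum
    have hy : y = Pi.single j 1 := by
      funext i
      by_cases hi : i = j
      · subst hi; simp [hyj]
      · simp [Pi.single_eq_of_ne hi, hy0 i (by simp [hi])]
    subst hy
    have hc : c = A j := by rw [← hAty, hmv]
    refine ⟨rfl, hc, ?_⟩
    rw [← hc, hcx, hdot]
  have hconstruct : ∀ (x : Fin n → ℝ) (bhat : ℝ), MILFeas A j bbar bL bU x bhat →
      ILgFeas A {j} bbar bL bU (A j) x (Pi.single j 1) (Function.update bbar j bhat) := by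
    intro x bhat ⟨h1, h2, h3, h4⟩
    refine ⟨?_, ?_, ?_, ?_, hmv, ?_, ?_, ?_⟩
    · intro i hi; exact Function.update_of_ne (by simpa using hi) _ _
    · intro i hi; exact Pi.single_eq_of_ne (by simpa using hi) _
    · intro i hi
      have : i = j := by simpa using hi
      subst this; simp [h3, h4]
    · intro i
      by_cases hi : i = j
      · subst hi; simp [Matrix.mulVec, h2]
      · rw [Function.update_of_ne hi]
        exact h1 i hi
    · rw [hdot]
      simp [h2]
    · simp
    · intro i
      by_cases hi : i = j
      · subst hi; simp
      · simp [Pi.single_eq_of_ne hi]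
  refine ⟨key, ⟨?_, ?_, ?_⟩, ?_, ?_⟩
  · -- MapsTo
    intro p hp
    obtain ⟨hy, hc, hax⟩ := key _ _ _ _ hp
    obtain ⟨hb, hy0, hbnd, hAx, hAty, hcx, hsum, hynn⟩ := hp
    refine ⟨fun i hi => ?_, hax, (hbnd j (by simp)).1, (hbnd j (by simp)).2⟩
    rw [← hb i (by simpa using hi)]
    exact hAx i
  · -- InjOn
    rintro ⟨c₁, x₁, y₁, b₁⟩ hp ⟨c₂, x₂, y₂, b₂⟩ hq heq
    obtain ⟨hy1, hc1, hax1⟩ := key _ _ _ _ hp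
    obtain ⟨hy2, hc2, hax2⟩ := key _ _ _ _ hq
    obtain ⟨hb1, -, -, -, -, -, -, -⟩ := hp
    obtain ⟨hb2, -, -, -, -, -, -, -⟩ := hq
    have hx : x₁ = x₂ := congrArg Prod.fst heq
    have hbj : b₁ j = b₂ j := congrArg Prod.snd heq
    have hb : b₁ = b₂ := by
      funext i
      by_cases hi : i = j
      · subst hi; exact hbj
      · exact (hb1 i (by simpa using hi)).trans (hb2 i (by simpa using hi)).symm
    simp only [Prod.mk.injEq]
    exact ⟨hc1.trans hc2.symm, hx, hy1.trans hy2.symm, hb⟩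
  · -- SurjOn
    rintro ⟨x, bhat⟩ hq
    exact ⟨(A j, x, Pi.single j 1, Function.update bbar j bhat),
      hconstruct x bhat hq, by simp⟩
  · -- objective correspondence
    intro c x y b h
    obtain ⟨hy, -, -⟩ := key _ _ _ _ h
    rw [hy, hdot]
  · -- image equality
    ext t
    constructor
    · rintro ⟨p, hp, rfl⟩
      obtain ⟨hy, hc, hax⟩ := key _ _ _ _ hp
      obtain ⟨hb, hy0, hbnd, hAx, hAty, hcx, hsum, hynn⟩ := hp
      refine ⟨(p.2.1, p.2.2.2 j), ⟨fun i hi => ?_, hax, (hbnd j (by simp)).1,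
        (hbnd j (by simp)).2⟩, ?_⟩
      · rw [← hb i (by simpa using hi)]; exact hAx i
      · simp [hy, hdot]
    · rintro ⟨⟨x, bhat⟩, hq, rfl⟩
      refine ⟨(A j, x, Pi.single j 1, Function.update bbar j bhat),
        hconstruct x bhat hq, ?_⟩
      simp [hdot]
end
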